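/- For every μ > -1, every t > 0, every x ∈ (0,1), and every y ∈ (1/2, 1), the ratio of transition densities satisfies ((y/(2−y))^{2μ+4}) · e^{−2(1−x)(1−y)/t} < p(t,x,2−y)/p(t,x,y) < ((2−y)/y)² · e^{−2(1−x)(1−y)/t}, where p(t,x,y) = (1/(2t))(xy)^{−μ} exp(−(x²+y²)/(2t)) I_μ(xy/t). -/

import Mathlib

/-!
Write `I_μ(2s) = s^μ F(s)` with `F(s) = ∑ₖ s^{2k} / (k! Γ(k+μ+1))`. Comparing consecutive terms
of this series (AM-GM together with the recurrence of the coefficients) gives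
`s F'(s) < 2 (1 + s) F(s)` and `s F'(s) > (2s - 2μ - 4) F(s)` for `s > 0`, i.e.
`F(s) e^{-2s} s^{-2}` decreases and `F(s) e^{-2s} s^{2μ+4}` increases on `(0, ∞)`: these are the
two ratio bounds for `I_μ`. In the density ratio the powers of `xy` cancel, the Gaussian factors
give `e^{-2(1-y)/t}`, and the ratio `F(q) / F(p)` at `p = xy/(2t) < q = x(2-y)/(2t)` gives the
bounds, its exponential factor `e^{2(q-p)} = e^{2x(1-y)/t}` completing `e^{-2(1-x)(1-y)/t}`.
-/

open Real

/-- Modified Bessel function of the first kind. -/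
noncomputable def besselI (μ z : ℝ) : ℝ :=
  ∑' k : ℕ, (z / 2) ^ (μ + 2 * (k : ℝ)) / ((Nat.factorial k : ℝ) * Real.Gamma ((k : ℝ) + μ + 1))

/-- Transition density (w.r.t. the speed measure) of the reflected Bessel process. -/
noncomputable def besselDensity (μ t a b : ℝ) : ℝ :=
  (1 / (2 * t)) * (a * b) ^ (-μ) * Real.exp (-(a ^ 2 + b ^ 2) / (2 * t)) * besselI μ (a * b / t)

open Set Filter

theorem tsum_le_tsum_sub_half_of_le_avg_succ {u v : ℕ → ℝ} (hu : Summable u) (hv : Summable v)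
    (h : ∀ k, u k ≤ (v k + v (k + 1)) / 2) : ∑' k, u k ≤ ∑' k, v k - v 0 / 2 := by
  have hv' : Summable fun k => v (k + 1) := (summable_nat_add_iff 1).mpr hv
  calc ∑' k, u k ≤ ∑' k, (v k + v (k + 1)) / 2 := hu.tsum_le_tsum h ((hv.add hv').div_const 2)
    _ = (∑' k, v k + ∑' k, v (k + 1)) / 2 := by rw [tsum_div_const, hv.tsum_add hv']
    _ = ∑' k, v k - v 0 / 2 := by rw [hv.tsum_eq_zero_add]; ring

section LogDerivativeBounds

variable {F F' : ℝ → ℝ} {a b : ℝ}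

theorem strictAntiOn_mul_exp_mul_rpow (hF : ∀ s, 0 < s → HasDerivAt F (F' s) s)
    (h : ∀ s, 0 < s → s * F' s < (a * s + b) * F s) :
    StrictAntiOn (fun s => F s * exp (-(a * s)) * s ^ (-b)) (Ioi 0) := by
  have hderiv : ∀ s, 0 < s → HasDerivAt (fun s => F s * exp (-(a * s)) * s ^ (-b))
      ((s * F' s - (a * s + b) * F s) * (exp (-(a * s)) * s ^ (-b - 1))) s := by
    intro s hs
    refine (((hF s hs).mul ((hasDerivAt_id s).const_mul a).neg.exp).mul
      (hasDerivAt_rpow_const (p := -b) (Or.inl hs.ne'))).congr_deriv ?_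
    simp only [Pi.neg_apply, Pi.mul_apply, id, rpow_sub_one hs.ne']
    field_simp
    ring
  refine strictAntiOn_of_deriv_neg (convex_Ioi 0)
    (fun s hs => (hderiv s hs).continuousAt.continuousWithinAt) fun s hs => ?_
  rw [interior_Ioi] at hs
  have hs : 0 < s := hs
  rw [(hderiv s hs).deriv]
  exact mul_neg_of_neg_of_pos (by linarith [h s hs]) (by positivity)

theorem lt_rpow_mul_exp_mul_of_mul_deriv_lt (hF : ∀ s, 0 < s → HasDerivAt F (F' s) s)
    (h : ∀ s, 0 < s → s * F' s < (a * s + b) * F s) {p q : ℝ} (hp : 0 < p) (hpq : p < q) :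
    F q < (q / p) ^ b * exp (a * (q - p)) * F p := by
  have hq : 0 < q := hp.trans hpq
  have hanti := strictAntiOn_mul_exp_mul_rpow hF h (mem_Ioi.2 hp) (mem_Ioi.2 hq) hpq
  have hscale : 0 < exp (a * q) * q ^ b := by positivity
  calc F q = F q * exp (-(a * q)) * q ^ (-b) * (exp (a * q) * q ^ b) := by
        rw [exp_neg, rpow_neg hq.le]; field_simp
    _ < F p * exp (-(a * p)) * p ^ (-b) * (exp (a * q) * q ^ b) :=
        mul_lt_mul_of_pos_right hanti hscale
    _ = (q / p) ^ b * exp (a * (q - p)) * F p := by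
        rw [div_rpow hq.le hp.le, rpow_neg hp.le, mul_sub, exp_sub, exp_neg]; field_simp

theorem rpow_mul_exp_mul_lt_of_lt_mul_deriv (hF : ∀ s, 0 < s → HasDerivAt F (F' s) s)
    (h : ∀ s, 0 < s → (a * s - b) * F s < s * F' s) {p q : ℝ} (hp : 0 < p) (hpq : p < q) :
    (p / q) ^ b * exp (a * (q - p)) * F p < F q := by
  have hneg := lt_rpow_mul_exp_mul_of_mul_deriv_lt (F := fun s => -F s) (F' := fun s => -F' s)
    (a := a) (b := -b) (fun s hs => (hF s hs).neg) (fun s hs => by linear_combination h s hs)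
    hp hpq
  rw [rpow_neg (div_pos (hp.trans hpq) hp).le, ← inv_rpow (div_pos (hp.trans hpq) hp).le,
    inv_div] at hneg
  linarith

end LogDerivativeBounds

noncomputable def besselCoeff (μ : ℝ) (k : ℕ) : ℝ := ((k.factorial : ℝ) * Gamma (k + μ + 1))⁻¹

section BesselCoeff

variable {μ : ℝ}

theorem natCast_add_add_one_pos (hμ : -1 < μ) (k : ℕ) : 0 < (k : ℝ) + μ + 1 := by
  linarith [k.cast_nonneg (α := ℝ)]

theorem besselCoeff_pos (hμ : -1 < μ) (k : ℕ) : 0 < besselCoeff μ k := by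
  have : 0 < Gamma (k + μ + 1) := Gamma_pos_of_pos (natCast_add_add_one_pos hμ k)
  unfold besselCoeff
  positivity

theorem besselCoeff_succ (hμ : -1 < μ) (k : ℕ) :
    besselCoeff μ (k + 1) = besselCoeff μ k / ((k + 1) * (k + μ + 1)) := by
  have hk := natCast_add_add_one_pos hμ k
  have hGamma : Gamma ((k : ℝ) + 1 + μ + 1) = (k + μ + 1) * Gamma (k + μ + 1) := by
    rw [← Gamma_add_one hk.ne']; ring_nf
  simp only [besselCoeff, hGamma, Nat.factorial_succ, Nat.cast_mul, Nat.cast_succ]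
  field_simp

theorem summable_besselCoeff_mul_pow (hμ : -1 < μ) (r : ℝ) :
    Summable fun k : ℕ => besselCoeff μ k * r ^ k := by
  refine summable_of_ratio_norm_eventually_le (r := 1 / 2) (by norm_num) ?_
  filter_upwards [eventually_ge_atTop ⌈2 * |r| - μ⌉₊] with k hk
  have hkμ := natCast_add_add_one_pos hμ k
  have hden : 0 < ((k : ℝ) + 1) * (k + μ + 1) := by positivity
  have hkr : 2 * |r| ≤ (k + 1) * (k + μ + 1) := by
    have := Nat.ceil_le.mp hk
    nlinarith
  have hc := besselCoeff_pos hμ k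
  simp only [norm_mul, norm_pow, Real.norm_eq_abs]
  rw [besselCoeff_succ hμ, abs_of_pos (div_pos hc hden), abs_of_pos hc, pow_succ,
    div_mul_eq_mul_div, div_le_iff₀ hden]
  have : 0 ≤ besselCoeff μ k * |r| ^ k := by positivity
  nlinarith

theorem summable_natCast_mul_besselCoeff_mul_pow (hμ : -1 < μ) (r : ℝ) :
    Summable fun k : ℕ => (k : ℝ) * besselCoeff μ k * r ^ k := by
  refine (summable_besselCoeff_mul_pow hμ (2 * |r|)).of_norm_bounded fun k => ?_
  have hc := besselCoeff_pos hμ k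
  have hk : (k : ℝ) ≤ 2 ^ k := by exact_mod_cast (Nat.lt_two_pow_self).le
  rw [norm_mul, norm_mul, Real.norm_of_nonneg hc.le, norm_pow, Real.norm_eq_abs, Nat.abs_cast,
    mul_pow]
  calc (k : ℝ) * besselCoeff μ k * |r| ^ k ≤ 2 ^ k * besselCoeff μ k * |r| ^ k := by gcongr
    _ = besselCoeff μ k * (2 ^ k * |r| ^ k) := by ring

end BesselCoeff

noncomputable def besselTerm (μ s : ℝ) (k : ℕ) : ℝ := besselCoeff μ k * s ^ (2 * k)

noncomputable def besselSeries (μ s : ℝ) : ℝ := ∑' k : ℕ, besselTerm μ s k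

section BesselSeries

variable {μ : ℝ}

theorem summable_besselTerm (hμ : -1 < μ) (s : ℝ) : Summable (besselTerm μ s) :=
  (summable_besselCoeff_mul_pow hμ (s ^ 2)).congr fun k => by rw [besselTerm, pow_mul]

theorem summable_natCast_mul_besselTerm (hμ : -1 < μ) (s : ℝ) :
    Summable fun k : ℕ => (k : ℝ) * besselTerm μ s k := by
  simpa only [besselTerm, pow_mul, mul_assoc] using
    summable_natCast_mul_besselCoeff_mul_pow hμ (s ^ 2)

theorem besselTerm_nonneg (hμ : -1 < μ) (s : ℝ) (k : ℕ) : 0 ≤ besselTerm μ s k := by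
  have := besselCoeff_pos hμ k
  rw [besselTerm, pow_mul]
  positivity

theorem mul_besselTerm_succ (hμ : -1 < μ) (s : ℝ) (k : ℕ) :
    ((k : ℝ) + 1) * (k + μ + 1) * besselTerm μ s (k + 1) = s ^ 2 * besselTerm μ s k := by
  have := natCast_add_add_one_pos hμ k
  rw [besselTerm, besselTerm, besselCoeff_succ hμ]
  field_simp
  ring

theorem besselSeries_pos (hμ : -1 < μ) (s : ℝ) : 0 < besselSeries μ s :=
  (summable_besselTerm hμ s).tsum_pos (besselTerm_nonneg hμ s) 0
    (by simpa [besselTerm] using besselCoeff_pos hμ 0)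

theorem hasDerivAt_besselSeries (hμ : -1 < μ) {s : ℝ} (hs : s ≠ 0) :
    HasDerivAt (besselSeries μ) (2 * (∑' k : ℕ, (k : ℝ) * besselTerm μ s k) / s) s := by
  set R := |s| + 1
  have hR : 1 ≤ R := by linarith [abs_nonneg s]
  have hbound : ∀ (k : ℕ), ∀ y ∈ Ioo (-R) R, ‖besselCoeff μ k * ((2 * k : ℕ) * y ^ (2 * k - 1))‖ ≤
      2 * ((k : ℝ) * besselTerm μ R k) := by
    intro k y hy
    have hc := besselCoeff_pos hμ k
    have hyR : |y| ≤ R := abs_le.2 ⟨hy.1.le, hy.2.le⟩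
    have hpow : |y| ^ (2 * k - 1) ≤ R ^ (2 * k) :=
      (pow_le_pow_left₀ (abs_nonneg y) hyR _).trans (pow_le_pow_right₀ hR (Nat.sub_le _ _))
    simp only [norm_mul, norm_pow, Real.norm_eq_abs, Nat.abs_cast, abs_of_pos hc, besselTerm]
    push_cast
    calc besselCoeff μ k * (2 * k * |y| ^ (2 * k - 1))
        ≤ besselCoeff μ k * (2 * k * R ^ (2 * k)) := by gcongr
      _ = 2 * (k * (besselCoeff μ k * R ^ (2 * k))) := by ring
  have hderiv := hasDerivAt_tsum_of_isPreconnected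
    ((summable_natCast_mul_besselTerm hμ R).mul_left 2) isOpen_Ioo
    (convex_Ioo (-R) R).isPreconnected (fun k y _ => (hasDerivAt_pow (2 * k) y).const_mul _)
    hbound (y₀ := 0) ⟨by linarith, by linarith⟩ (summable_besselTerm hμ 0)
    (⟨by linarith [neg_abs_le s], by linarith [le_abs_self s]⟩ : s ∈ Ioo (-R) R)
  refine hderiv.congr_deriv ?_
  rw [eq_div_iff hs, ← tsum_mul_right, ← tsum_mul_left]
  refine tsum_congr fun k => ?_
  rcases k with _ | k
  · simp
  · rw [besselTerm, show 2 * (k + 1) = 2 * k + 1 + 1 by ring, Nat.add_sub_cancel, pow_succ]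
    push_cast
    ring

end BesselSeries

section BesselSeriesBounds

variable {μ : ℝ}

theorem tsum_natCast_mul_besselTerm_lt (hμ : -1 < μ) {s : ℝ} (hs : 0 < s) :
    ∑' k : ℕ, (k : ℝ) * besselTerm μ s k < (1 + s) * besselSeries μ s := by
  have ha := summable_besselTerm hμ s
  have hka := summable_natCast_mul_besselTerm hμ s
  have ha0 : 0 < besselTerm μ s 0 := by simpa [besselTerm] using besselCoeff_pos hμ 0
  have ha' : Summable fun k => besselTerm μ s (k + 1) := (summable_nat_add_iff 1).mpr ha
  have hu : Summable fun k : ℕ => (k : ℝ) * besselTerm μ s (k + 1) :=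
    ((summable_nat_add_iff 1).mpr hka).of_nonneg_of_le
      (fun k => mul_nonneg k.cast_nonneg (besselTerm_nonneg hμ s _))
      fun k => by gcongr; exacts [besselTerm_nonneg hμ s _, by simp]
  -- with `a_k = besselTerm μ s k`: `2ks ≤ s² + k²`, and
  -- `k² a_{k+1} ≤ (k + 1)(k + μ + 1) a_{k+1} = s² a_k`
  have hterm : ∀ k : ℕ, (k : ℝ) * besselTerm μ s (k + 1) ≤
      (s * besselTerm μ s k + s * besselTerm μ s (k + 1)) / 2 := by
    intro k
    have hrec := mul_besselTerm_succ hμ s k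
    have hA' := besselTerm_nonneg hμ s (k + 1)
    have hk : (k : ℝ) ^ 2 ≤ (k + 1) * (k + μ + 1) := by nlinarith [natCast_add_add_one_pos hμ k]
    refine le_of_mul_le_mul_left ?_ hs
    nlinarith [mul_nonneg hA' (sq_nonneg (s - k)), mul_le_mul_of_nonneg_left hk hA']
  have hsum := tsum_le_tsum_sub_half_of_le_avg_succ hu (ha.mul_left s) hterm
  have hK : ∑' k : ℕ, (k : ℝ) * besselTerm μ s k =
      ∑' k : ℕ, (k : ℝ) * besselTerm μ s (k + 1) + (besselSeries μ s - besselTerm μ s 0) := by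
    rw [hka.tsum_eq_zero_add, besselSeries, ha.tsum_eq_zero_add,
      tsum_congr fun k => (by push_cast; ring : ((k + 1 : ℕ) : ℝ) * besselTerm μ s (k + 1) =
        k * besselTerm μ s (k + 1) + besselTerm μ s (k + 1)), hu.tsum_add ha']
    simp
  rw [tsum_mul_left, ← besselSeries] at hsum
  nlinarith

theorem mul_besselSeries_lt (hμ : -1 < μ) (s : ℝ) :
    s * besselSeries μ s < ∑' k : ℕ, (k : ℝ) * besselTerm μ s k + (μ + 2) * besselSeries μ s := by
  have ha := summable_besselTerm hμ s
  have hka := summable_natCast_mul_besselTerm hμ s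
  have ha0 : 0 < besselTerm μ s 0 := by simpa [besselTerm] using besselCoeff_pos hμ 0
  have hv : Summable fun k : ℕ => ((k : ℝ) + μ + 2) * besselTerm μ s k :=
    (hka.add (ha.mul_left (μ + 2))).congr fun k => by ring
  -- with `a_k = besselTerm μ s k` and `w = k + μ + 2`: `2sw ≤ w² + s²`, and
  -- `s² a_k = (k + 1)(k + μ + 1) a_{k+1} ≤ w (w + 1) a_{k+1}`
  have hterm : ∀ k : ℕ, s * besselTerm μ s k ≤ (((k : ℝ) + μ + 2) * besselTerm μ s k +
      (((k + 1 : ℕ) : ℝ) + μ + 2) * besselTerm μ s (k + 1)) / 2 := by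
    intro k
    have hrec := mul_besselTerm_succ hμ s k
    have hA := besselTerm_nonneg hμ s k
    have hA' := besselTerm_nonneg hμ s (k + 1)
    have hkμ := natCast_add_add_one_pos hμ k
    have hk : ((k : ℝ) + 1) * (k + μ + 1) ≤ (k + μ + 2) * (k + μ + 3) := by nlinarith
    push_cast
    refine le_of_mul_le_mul_left ?_ (by linarith : (0 : ℝ) < k + μ + 2)
    nlinarith [mul_nonneg hA (sq_nonneg ((k : ℝ) + μ + 2 - s)), mul_le_mul_of_nonneg_left hk hA']
  have hsum := tsum_le_tsum_sub_half_of_le_avg_succ (ha.mul_left s) hv hterm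
  have hT : ∑' k : ℕ, ((k : ℝ) + μ + 2) * besselTerm μ s k =
      ∑' k : ℕ, (k : ℝ) * besselTerm μ s k + (μ + 2) * besselSeries μ s := by
    rw [besselSeries, ← tsum_mul_left, ← hka.tsum_add (ha.mul_left (μ + 2))]
    exact tsum_congr fun k => by ring
  rw [tsum_mul_left, ← besselSeries, hT] at hsum
  push_cast at hsum
  nlinarith

end BesselSeriesBounds

section BesselSeriesRatio

variable {μ p q : ℝ}

theorem besselSeries_div_lt (hμ : -1 < μ) (hp : 0 < p) (hpq : p < q) :
    besselSeries μ q / besselSeries μ p < (q / p) ^ 2 * exp (2 * (q - p)) := by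
  rw [div_lt_iff₀ (besselSeries_pos hμ p), ← rpow_two]
  refine lt_rpow_mul_exp_mul_of_mul_deriv_lt (fun s hs => hasDerivAt_besselSeries hμ hs.ne')
    (fun s hs => ?_) hp hpq
  rw [mul_div_cancel₀ _ hs.ne']
  linarith [tsum_natCast_mul_besselTerm_lt hμ hs]

theorem lt_besselSeries_div (hμ : -1 < μ) (hp : 0 < p) (hpq : p < q) :
    (p / q) ^ (2 * μ + 4) * exp (2 * (q - p)) < besselSeries μ q / besselSeries μ p := by
  rw [lt_div_iff₀ (besselSeries_pos hμ p)]
  refine rpow_mul_exp_mul_lt_of_lt_mul_deriv (fun s hs => hasDerivAt_besselSeries hμ hs.ne')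
    (fun s hs => ?_) hp hpq
  rw [mul_div_cancel₀ _ hs.ne']
  linarith [mul_besselSeries_lt hμ s]

end BesselSeriesRatio

theorem besselI_eq_rpow_mul_besselSeries (μ : ℝ) {z : ℝ} (hz : 0 < z) :
    besselI μ z = (z / 2) ^ μ * besselSeries μ (z / 2) := by
  rw [besselI, besselSeries, ← tsum_mul_left]
  refine tsum_congr fun k => ?_
  rw [besselTerm, besselCoeff, rpow_add (by positivity), show 2 * (k : ℝ) = (2 * k : ℕ) by simp,
    rpow_natCast]
  ring

theorem besselDensity_eq (μ : ℝ) {t a b : ℝ} (ht : 0 < t) (ha : 0 < a) (hb : 0 < b) :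
    besselDensity μ t a b =
      (2 * t)⁻¹ * ((2 * t) ^ μ)⁻¹ * exp (-(a ^ 2 + b ^ 2) / (2 * t)) *
        besselSeries μ (a * b / (2 * t)) := by
  have hab : 0 < a * b := mul_pos ha hb
  rw [besselDensity, besselI_eq_rpow_mul_besselSeries μ (by positivity), div_div, mul_comm t 2,
    div_rpow hab.le (by positivity), rpow_neg hab.le]
  have := (rpow_pos_of_pos hab μ).ne'
  field_simp

theorem besselDensity_div_besselDensity (μ : ℝ) {t a b b' : ℝ} (ht : 0 < t) (ha : 0 < a)
    (hb : 0 < b) (hb' : 0 < b') :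
    besselDensity μ t a b' / besselDensity μ t a b =
      exp ((b ^ 2 - b' ^ 2) / (2 * t)) *
        (besselSeries μ (a * b' / (2 * t)) / besselSeries μ (a * b / (2 * t))) := by
  have hC : (2 * t)⁻¹ * ((2 * t) ^ μ)⁻¹ ≠ 0 := by positivity
  rw [besselDensity_eq μ ht ha hb, besselDensity_eq μ ht ha hb', mul_div_mul_comm,
    mul_div_mul_left _ _ hC, ← exp_sub]
  congr 2
  ring

theorem density_ratio_reflected_general (μ t x y : ℝ) (hμ : -1 < μ) (ht : 0 < t)
    (hx1 : 0 < x) (hy1 : 1/2 < y) (hy2 : y < 1) :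
    (y / (2 - y)) ^ (2 * μ + 4) * Real.exp (-(2 * (1 - x) * (1 - y)) / t) <
      besselDensity μ t x (2 - y) / besselDensity μ t x y ∧
    besselDensity μ t x (2 - y) / besselDensity μ t x y <
      ((2 - y) / y) ^ (2 : ℕ) * Real.exp (-(2 * (1 - x) * (1 - y)) / t) := by
  have hy : 0 < y := by linarith
  have h2y : 0 < 2 - y := by linarith
  have hp : 0 < x * y / (2 * t) := by positivity
  have hpq : x * y / (2 * t) < x * (2 - y) / (2 * t) := by gcongr; linarith
  have lower := lt_besselSeries_div hμ hp hpq
  have upper := besselSeries_div_lt hμ hp hpq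
  rw [show x * y / (2 * t) / (x * (2 - y) / (2 * t)) = y / (2 - y) by field_simp] at lower
  rw [show x * (2 - y) / (2 * t) / (x * y / (2 * t)) = (2 - y) / y by field_simp] at upper
  have hexp : exp (-(2 * (1 - x) * (1 - y)) / t) = exp ((y ^ 2 - (2 - y) ^ 2) / (2 * t)) *
      exp (2 * (x * (2 - y) / (2 * t) - x * y / (2 * t))) := by
    rw [← exp_add]; congr 1; field_simp; ring
  rw [besselDensity_div_besselDensity μ ht hx1 hy h2y, hexp]
  constructor
  · calc _ = exp ((y ^ 2 - (2 - y) ^ 2) / (2 * t)) * ((y / (2 - y)) ^ (2 * μ + 4) *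
          exp (2 * (x * (2 - y) / (2 * t) - x * y / (2 * t)))) := by ring
      _ < _ := mul_lt_mul_of_pos_left lower (exp_pos _)
  · calc _ < exp ((y ^ 2 - (2 - y) ^ 2) / (2 * t)) * (((2 - y) / y) ^ 2 *
          exp (2 * (x * (2 - y) / (2 * t) - x * y / (2 * t)))) :=
        mul_lt_mul_of_pos_left upper (exp_pos _)
      _ = _ := by ring

theorem density_ratio_reflected (μ t x y : ℝ) (hμ : -1 < μ) (ht : 0 < t)
    (hx1 : 0 < x) (hx2 : x < 1) (hy1 : 1/2 < y) (hy2 : y < 1) :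
    (y / (2 - y)) ^ (2 * μ + 4) * Real.exp (-(2 * (1 - x) * (1 - y)) / t) <
      besselDensity μ t x (2 - y) / besselDensity μ t x y ∧
    besselDensity μ t x (2 - y) / besselDensity μ t x y <
      ((2 - y) / y) ^ (2 : ℕ) * Real.exp (-(2 * (1 - x) * (1 - y)) / t) :=
  density_ratio_reflected_general μ t x y hμ ht hx1 hy1 hy2
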